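/- arXiv:math/0308128 — 5 statements merged into one kernel-verified Lean document; each statement's English description precedes it below -/
import Mathlib

section
/- For every 3-dimensional isotropic subspace U ⊆ V, the common kernel L_U = {x ∈ Ŵ : u·x = 0 for all u ∈ U} is a one-dimensional subspace of Ŵ. -/
/-!
Pick a basis `u₁, u₂, u₃` of `U` and, by nondegeneracy of `B`, vectors `y₁, y₂, y₃` with
`B(u_i, y_j) = δ_ij`. By the Clifford relations `a_i = u_i·` and `b_j = (-y_j)·` satisfy the
canonical anticommutation relations `a_i a_j + a_j a_i = 0`, `a_i² = 0` (as `U` is isotropic) and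
`a_i b_j + b_j a_i = δ_ij`. On any subspace stable under `a` and `b` with `a² = 0` and
`ab + ba = 1`, the image of `a` equals its kernel, so imposing one more equation `a_i x = 0`
halves the dimension: `dim L_U = 8 / 2³ = 1`.
-/

namespace SSD

noncomputable section

/-- `V` is the 7-dimensional complex vector space `ℂ^7`. -/
abbrev V7 : Type := Fin 7 → ℂ

/-- `Ŵ` is the 8-dimensional spin space, with basis (in this order):
`1, v̂₅, v̂₆, v̂₇, v̂₅v̂₆, v̂₆v̂₇, v̂₅v̂₇, v̂₅v̂₆v̂₇`. -/
abbrev W8 : Type := Fin 8 → ℂ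

/-- The constant `1/√2` as a complex number. -/
def is2 : ℂ := ((Real.sqrt 2 : ℝ) : ℂ)⁻¹

/-- The Clifford action of `v ∈ V` on `x ∈ Ŵ`:  `e₅,e₆,e₇` act by exterior
multiplication by `v̂₅,v̂₆,v̂₇`; `e₁,e₂,e₃` act by `−∂/∂v̂₇, ∂/∂v̂₆, −∂/∂v̂₅`;
`e₄` acts by `(1/√2)·(−1)^deg`. Written out in coordinates. -/
def actFun (v : V7) (x : W8) : W8 := fun k =>
  match k with
  | 0 => -(v 0) * x 3 + v 1 * x 2 - v 2 * x 1 + is2 * v 3 * x 0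
  | 1 => v 0 * x 6 - v 1 * x 4 - is2 * v 3 * x 1 + v 4 * x 0
  | 2 => v 0 * x 5 - v 2 * x 4 - is2 * v 3 * x 2 + v 5 * x 0
  | 3 => v 1 * x 5 - v 2 * x 6 - is2 * v 3 * x 3 + v 6 * x 0
  | 4 => -(v 0) * x 7 + is2 * v 3 * x 4 + v 4 * x 2 - v 5 * x 1
  | 5 => -(v 2) * x 7 + is2 * v 3 * x 5 + v 5 * x 3 - v 6 * x 2
  | 6 => -(v 1) * x 7 + is2 * v 3 * x 6 + v 4 * x 3 - v 6 * x 1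
  | 7 => -(is2 * v 3) * x 7 + v 4 * x 5 - v 5 * x 6 + v 6 * x 4

/-- The action `v · x`, packaged as a bilinear map. -/
def act : V7 →ₗ[ℂ] W8 →ₗ[ℂ] W8 :=
  LinearMap.mk₂ ℂ actFun
    (fun m m' n => by funext k; fin_cases k <;> simp [actFun] <;> ring)
    (fun c m n => by funext k; fin_cases k <;> simp [actFun] <;> ring)
    (fun m n n' => by funext k; fin_cases k <;> simp [actFun] <;> ring)
    (fun c m n => by funext k; fin_cases k <;> simp [actFun] <;> ring)

/-- The bilinear form `B` on `V`: `B(eᵢ,eⱼ) = (−1)^(i+1)` if `i+j=8`, else `0`. -/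
def Bform (u w : V7) : ℂ :=
  u 0 * w 6 + u 6 * w 0 - u 1 * w 5 - u 5 * w 1 + u 2 * w 4 + u 4 * w 2 - u 3 * w 3

/-- The quadratic form `Q(v) = B(v,v)/2` on `V`. -/
def Qform (v : V7) : ℂ := Bform v v / 2

/-- The quadratic form `Q̂` on `Ŵ`:
`Q̂ = α_∅α₅₆₇ + α₆α₅₇ − α₇α₅₆ − α₆₇α₅` in the coordinates of the basis above. -/
def Qhat (x : W8) : ℂ := x 0 * x 7 + x 2 * x 6 - x 3 * x 4 - x 5 * x 1

/-- The bilinear form `B̂(p,q) = Q̂(p+q) − Q̂(p) − Q̂(q)` on `Ŵ`. -/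
def Bhat (p q : W8) : ℂ := Qhat (p + q) - Qhat p - Qhat q

/-- A subspace `U ⊆ V` is isotropic if `B` vanishes identically on it. -/
def IsIsotropic (U : Submodule ℂ V7) : Prop :=
  ∀ u ∈ U, ∀ w ∈ U, Bform u w = 0

/-- `L_U = {x ∈ Ŵ | u·x = 0 for all u ∈ U}`. -/
def LU (U : Submodule ℂ V7) : Submodule ℂ W8 :=
  ⨅ u ∈ U, LinearMap.ker (act u)

/-- `ψ : Ŵ → V` is an invariant surjection with spinor `p` if `p ≠ 0`, `ψ(p)=0`
and `ψ(v·p) = v` for all `v ∈ V`. -/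
def IsInvSurj (ψ : W8 →ₗ[ℂ] V7) (p : W8) : Prop :=
  p ≠ 0 ∧ ψ p = 0 ∧ ∀ v : V7, ψ (act v p) = v

section Fermion

variable {K E : Type*} [Field K] [AddCommGroup E] [Module K E]

open Module LinearMap

/- On `P` the image of `a` is its kernel: `a * a = 0` gives one inclusion, and `x = a (b x)` for
`x ∈ ker a` the other. Rank–nullity then halves the dimension. -/
theorem finrank_eq_two_mul_finrank_inf_ker [FiniteDimensional K E] {P : Submodule K E}
    {a b : End K E} (ha : a * a = 0) (hab : a * b + b * a = 1)
    (haP : ∀ x ∈ P, a x ∈ P) (hbP : ∀ x ∈ P, b x ∈ P) :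
    finrank K P = 2 * finrank K ↥(P ⊓ ker a) := by
  have hrange : range (a.domRestrict P) = P ⊓ ker a := by
    rw [range_domRestrict]
    apply le_antisymm
    · rintro _ ⟨x, hx, rfl⟩
      exact ⟨haP x hx, by simpa using congr($ha x)⟩
    · rintro x ⟨hxP, hxa⟩
      refine ⟨b x, hbP x hxP, ?_⟩
      simpa [LinearMap.mem_ker.mp hxa] using congr($hab x)
  have hker : finrank K (ker (a.domRestrict P)) = finrank K ↥(P ⊓ ker a) := by
    rw [ker_domRestrict, (Submodule.equivSubtypeMap P _).finrank_eq, Submodule.map_comap_subtype]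
  have := (a.domRestrict P).finrank_range_add_finrank_ker
  rw [hrange, hker] at this
  omega

theorem mem_iInf_ker_of_anticomm {ι : Type*} {a : ι → End K E} {c : End K E} {s : Finset ι}
    (hc : ∀ i ∈ s, a i * c + c * a i = 0) {x : E} (hx : x ∈ ⨅ i ∈ s, ker (a i)) :
    c x ∈ ⨅ i ∈ s, ker (a i) := by
  simp only [Submodule.mem_iInf, mem_ker] at hx ⊢
  intro i hi
  simpa only [LinearMap.add_apply, Module.End.mul_apply, hx i hi, map_zero, add_zero,
    LinearMap.zero_apply] using congr($(hc i hi) x)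

theorem finrank_eq_two_pow_card_mul_finrank_iInf_ker [FiniteDimensional K E] {ι : Type*}
    [DecidableEq ι] {a b : ι → End K E} (ha_sq : ∀ i, a i * a i = 0)
    (haa : ∀ i j, i ≠ j → a i * a j + a j * a i = 0)
    (hab : ∀ i j, a i * b j + b j * a i = if i = j then 1 else 0) (s : Finset ι) :
    finrank K E = 2 ^ s.card * finrank K ↥(⨅ i ∈ s, ker (a i)) := by
  induction s using Finset.induction_on with
  | empty =>
    have htop : (⨅ i ∈ (∅ : Finset ι), ker (a i)) = ⊤ := by simp
    rw [htop, finrank_top, Finset.card_empty, pow_zero, one_mul]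
  | insert j s hj ih =>
    have hne : ∀ i ∈ s, i ≠ j := fun i hi h => hj (h ▸ hi)
    have hP := finrank_eq_two_mul_finrank_inf_ker (P := ⨅ i ∈ s, ker (a i)) (ha_sq j)
      (by simpa using hab j j)
      (fun x => mem_iInf_ker_of_anticomm (fun i hi => haa i j (hne i hi)))
      (fun x => mem_iInf_ker_of_anticomm (fun i hi => by simpa [hne i hi] using hab i j))
    rw [Finset.iInf_insert, inf_comm, Finset.card_insert_of_notMem hj, ih, hP, pow_succ]
    ring

end Fermion

theorem exists_dual_family {K V ι : Type*} [Field K] [AddCommGroup V] [Module K V]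
    [FiniteDimensional K V] [Fintype ι] [DecidableEq ι] {B : LinearMap.BilinForm K V}
    (hB : B.Nondegenerate) {u : ι → V} (hu : LinearIndependent K u) :
    ∃ y : ι → V, ∀ i j, B (u i) (y j) = if i = j then 1 else 0 := by
  have hsurj := LinearMap.dualMap_surjective_of_injective hu.fintypeLinearCombination_injective
  choose φ hφ using fun j => hsurj (LinearMap.proj j)
  refine ⟨fun j => (B.flip.toDual hB.flip).symm (φ j), fun i j => ?_⟩
  have := congr($(hφ j) (Pi.single i 1))
  simp only [LinearMap.dualMap_apply, Fintype.linearCombination_apply_single, one_smul,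
    LinearMap.coe_proj, Function.eval, Pi.single_apply] at this
  show B.flip _ (u i) = _
  rw [LinearMap.BilinForm.apply_toDual_symm_apply]
  simpa [eq_comm] using this

theorem iInf_ker_eq_of_span {R M N P ι : Type*} [CommRing R] [AddCommGroup M] [Module R M]
    [AddCommGroup N] [Module R N] [AddCommGroup P] [Module R P]
    (f : M →ₗ[R] N →ₗ[R] P) (u : ι → M) :
    ⨅ v ∈ Submodule.span R (Set.range u), LinearMap.ker (f v) = ⨅ i, LinearMap.ker (f (u i)) := by
  apply le_antisymm
  · exact le_iInf fun i => iInf₂_le (u i) (Submodule.subset_span (Set.mem_range_self i))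
  · intro x hx
    simp only [Submodule.mem_iInf, LinearMap.mem_ker] at hx ⊢
    intro v hv
    have : Submodule.span R (Set.range u) ≤ LinearMap.ker (f.flip x) :=
      Submodule.span_le.mpr (by rintro _ ⟨i, rfl⟩; exact hx i)
    exact this hv

lemma is2_sq : is2 ^ 2 = 2⁻¹ := by
  rw [is2, inv_pow, ← Complex.ofReal_pow, Real.sq_sqrt zero_le_two]
  norm_num

theorem act_mul_act_add_act_mul_act (v w : V7) :
    act v * act w + act w * act v = -Bform v w • (1 : Module.End ℂ W8) := by
  refine LinearMap.ext fun x => funext fun k => ?_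
  fin_cases k <;>
    simp only [act, actFun, Bform, LinearMap.mk₂_apply, LinearMap.add_apply, LinearMap.smul_apply,
      Module.End.mul_apply, Module.End.one_apply, Pi.add_apply, Pi.smul_apply, smul_eq_mul,
      Fin.isValue, Fin.mk_one, Fin.reduceFinMk, Fin.zero_eta, neg_mul, neg_sub] <;>
    ring_nf <;> rw [is2_sq] <;> ring

theorem act_mul_self (v : V7) : act v * act v = -Qform v • (1 : Module.End ℂ W8) := by
  have h := act_mul_act_add_act_mul_act v v
  rw [← two_smul ℂ] at h
  rw [Qform, ← inv_smul_smul₀ (two_ne_zero (α := ℂ)) (act v * act v), h, smul_smul]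
  ring_nf

def bilinForm : LinearMap.BilinForm ℂ V7 :=
  LinearMap.mk₂ ℂ Bform
    (fun _ _ _ => by simp only [Bform, Pi.add_apply]; ring)
    (fun _ _ _ => by simp only [Bform, Pi.smul_apply, smul_eq_mul]; ring)
    (fun _ _ _ => by simp only [Bform, Pi.add_apply]; ring)
    (fun _ _ _ => by simp only [Bform, Pi.smul_apply, smul_eq_mul]; ring)

theorem bilinForm_nondegenerate : bilinForm.Nondegenerate := by
  constructor <;> refine fun z hz => funext fun k => ?_ <;> have := hz (Pi.single k.rev 1) <;>
    fin_cases k <;> simpa [bilinForm, Bform] using this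

/-- for every 3-dimensional isotropic subspace `U ⊆ V`, the common
kernel `L_U` is one-dimensional. -/
theorem statement_1 (U : Submodule ℂ V7)
    (hdim : Module.finrank ℂ U = 3) (hiso : IsIsotropic U) :
    Module.finrank ℂ (LU U) = 1 := by
  let bU := Module.finBasisOfFinrankEq ℂ U hdim
  let u : Fin 3 → V7 := U.subtype ∘ bU
  have hu : LinearIndependent ℂ u := bU.linearIndependent.map' U.subtype U.ker_subtype
  have hspan : Submodule.span ℂ (Set.range u) = U := by
    rw [Set.range_comp, ← Submodule.map_span, bU.span_eq, Submodule.map_top, Submodule.range_subtype]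
  have huu : ∀ i j, Bform (u i) (u j) = 0 := fun i j => hiso _ (bU i).2 _ (bU j).2
  obtain ⟨y, hy⟩ := exists_dual_family bilinForm_nondegenerate hu
  have ha_sq : ∀ i, act (u i) * act (u i) = 0 := fun i => by simp [act_mul_self, Qform, huu]
  have haa : ∀ i j, i ≠ j → act (u i) * act (u j) + act (u j) * act (u i) = 0 := fun i j _ => by
    simp [act_mul_act_add_act_mul_act, huu]
  have hab : ∀ i j, act (u i) * act (-y j) + act (-y j) * act (u i) = if i = j then 1 else 0 := by
    intro i j
    have hBy : Bform (u i) (-y j) = -if i = j then 1 else 0 := by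
      rw [← hy i j]
      exact map_neg (bilinForm (u i)) (y j)
    rw [act_mul_act_add_act_mul_act, hBy, neg_neg]
    split_ifs <;> simp
  have hcount := finrank_eq_two_pow_card_mul_finrank_iInf_ker ha_sq haa hab Finset.univ
  have huniv : (⨅ i ∈ Finset.univ, LinearMap.ker (act (u i))) = ⨅ i, LinearMap.ker (act (u i)) := by
    simp
  rw [huniv, Module.finrank_fin_fun, Finset.card_univ, Fintype.card_fin] at hcount
  rw [LU, ← hspan, iInf_ker_eq_of_span]
  omega

end
end SSD
end

section
/- For every v ∈ V and all p, q ∈ Ŵ, one has B̂(v·p, v·q) = Q(v)·B̂(p, q). -/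
namespace SSD

noncomputable section

/-- `B̂(v·p, v·q) = Q(v)·B̂(p,q)`. -/
theorem statement_6 (v : V7) (p q : W8) :
    Bhat (act v p) (act v q) = Qform v * Bhat p q := by
  have hs : is2 * is2 = 1/2 := by
    have h2 : (Real.sqrt 2 : ℝ) * Real.sqrt 2 = 2 := Real.mul_self_sqrt (by norm_num)
    rw [is2, ← Complex.ofReal_inv, ← Complex.ofReal_mul, ← mul_inv, h2]
    norm_num
  simp only [Bhat, Qhat, Qform, Bform, act, actFun, LinearMap.mk₂_apply, Pi.add_apply]
  linear_combination (-(v 3)^2 * (p 0 * q 7 + q 0 * p 7 + p 2 * q 6 + q 2 * p 6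
    - p 3 * q 4 - q 3 * p 4 - p 5 * q 1 - q 5 * p 1)) * hs

end
end SSD
end

section
/- For all u, v ∈ V and every p ∈ Ŵ, one has B̂(u·p, v·p) = B(u,v)·Q̂(p). -/
namespace SSD

noncomputable section

lemma is2_sq_s7 : is2 * is2 = 1/2 := by
  have h : ((Real.sqrt 2 : ℝ) : ℂ) * ((Real.sqrt 2 : ℝ) : ℂ) = 2 := by
    rw [← Complex.ofReal_mul, Real.mul_self_sqrt (by norm_num)]; norm_num
  rw [is2, ← mul_inv, h]
  norm_num

/-- `B̂(u·p, v·p) = B(u,v)·Q̂(p)`. -/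
theorem statement_7 (u v : V7) (p : W8) :
    Bhat (act u p) (act v p) = Bform u v * Qhat p := by
  simp only [Bhat, Qhat, Bform, act, LinearMap.mk₂_apply, actFun, Pi.add_apply]
  linear_combination (-2 * u 3 * v 3 * (p 0 * p 7 + p 2 * p 6 - p 3 * p 4 - p 5 * p 1)) * is2_sq_s7

end
end SSD
end

section
/- If ψ : Ŵ → V is an invariant surjection with spinor p, then Q̂(p) ≠ 0. -/
namespace SSD

noncomputable section

/-! An invariant surjection with spinor `p` has kernel `ℂp`, so `Ŵ = V·p + ℂp`. On such vectors
`B̂` is governed by the Clifford relation `u·(w·x) + w·(u·x) = -B(u,w) x`, which makes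
`B̂(u·p + a p, w·p + b p)` a multiple of `Q̂(p)`. Were `Q̂(p) = 0`, the form `B̂` would vanish
identically, but it is nondegenerate. -/

lemma is2_mul_self : is2 * is2 = 1 / 2 := by
  rw [is2, ← mul_inv, ← Complex.ofReal_mul, Real.mul_self_sqrt zero_le_two]
  norm_num

lemma Bhat_act_add_smul (u w : V7) (a b : ℂ) (x : W8) :
    Bhat (act u x + a • x) (act w x + b • x) = (Bform u w + 2 * a * b) * Qhat x := by
  simp only [Bhat, Qhat, Bform, act, LinearMap.mk₂_apply, actFun, Pi.add_apply,
    Pi.smul_apply, smul_eq_mul]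
  linear_combination
    (-2 * u 3 * w 3 * (x 0 * x 7 + x 2 * x 6 - x 3 * x 4 - x 5 * x 1)) * is2_mul_self

lemma Bhat_single_zero_single_seven : Bhat (Pi.single 0 1) (Pi.single 7 1) = 1 := by
  simp [Bhat, Qhat]

lemma LinearMap.ker_eq_span_singleton_of_surjective {K M N : Type*} [Field K]
    [AddCommGroup M] [Module K M] [FiniteDimensional K M] [AddCommGroup N] [Module K N]
    {ψ : M →ₗ[K] N} (hψ : Function.Surjective ψ)
    (hdim : Module.finrank K M = Module.finrank K N + 1)
    {p : M} (hp : p ≠ 0) (hψp : ψ p = 0) : LinearMap.ker ψ = K ∙ p := by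
  have hrank := ψ.finrank_range_add_finrank_ker
  rw [LinearMap.range_eq_top.mpr hψ, finrank_top] at hrank
  exact eq_span_singleton_of_mem_of_finrank_eq_one (by omega) hψp hp

namespace IsInvSurj

variable {ψ : W8 →ₗ[ℂ] V7} {p : W8}

lemma ker_eq_span (h : IsInvSurj ψ p) : LinearMap.ker ψ = ℂ ∙ p :=
  LinearMap.ker_eq_span_singleton_of_surjective (fun v => ⟨act v p, h.2.2 v⟩)
    (by simp) h.1 h.2.1

lemma exists_eq_act_add_smul (h : IsInvSurj ψ p) (q : W8) :
    ∃ c : ℂ, q = act (ψ q) p + c • p := by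
  have hker : q - act (ψ q) p ∈ LinearMap.ker ψ := by
    simp [LinearMap.mem_ker, h.2.2]
  rw [h.ker_eq_span, Submodule.mem_span_singleton] at hker
  obtain ⟨c, hc⟩ := hker
  exact ⟨c, by rw [hc]; abel⟩

end IsInvSurj

/-- if `ψ : Ŵ → V` is an invariant surjection with spinor `p`,
then `Q̂(p) ≠ 0` (i.e. `p` is non-isotropic). -/
theorem statement_10 (ψ : W8 →ₗ[ℂ] V7) (p : W8) (h : IsInvSurj ψ p) :
    Qhat p ≠ 0 := by
  intro hQ
  obtain ⟨a, ha⟩ := h.exists_eq_act_add_smul (Pi.single 0 1)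
  obtain ⟨b, hb⟩ := h.exists_eq_act_add_smul (Pi.single 7 1)
  have hBhat := Bhat_act_add_smul (ψ (Pi.single 0 1)) (ψ (Pi.single 7 1)) a b p
  rw [← ha, ← hb, hQ, mul_zero, Bhat_single_zero_single_seven] at hBhat
  exact one_ne_zero hBhat

end
end SSD
end

section
/- Let θ : Cl(−Q) → End(Ŵ) be the algebra homomorphism induced by the action of V on Ŵ, and let ι : V → Cl(−Q) be the canonical embedding. For every nonzero c ∈ ℂ and all x, y ∈ Ŵ with Q̂(x) = Q̂(y) = c, there exists an invertible element g of the even Clifford subalgebra of Cl(−Q) satisfying g·reverse(g) = 1 and g·ι(v)·g⁻¹ ∈ ι(V) for all v ∈ V (i.e., g lies in the spin group of −Q), such that θ(g)(x) = y. In other words, for each c ≠ 0 the level set {x ∈ Ŵ : Q̂(x) = c} is a single orbit of the spin group acting on Ŵ via θ. -/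
/-!
Given `x, y` with `Q̂ x = Q̂ y = c ≠ 0`, choose `w ∈ V` with `−Q w ≠ 0` such that `z = w · x` is
`B̂`-orthogonal to `y`; it is automatically orthogonal to `x`, and `Q̂ z = Q w · c ≠ 0`. The
octonionic cross product yields vectors `v, u` with `v · x = c z = u · y`, and both have
`−Q`-value `q = −c Q̂ z`. Hence `u · v · x = u · u · y = q y`, so `g = q⁻¹ ι(u) ι(v)`, a product of
two vectors whose `−Q`-values multiply to `1`, lies in the spin group and sends `x` to `y`.
-/

namespace SSD

noncomputable section

def BL : LinearMap.BilinMap ℂ V7 ℂ :=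
  LinearMap.mk₂ ℂ (fun u w => -(Bform u w) / 2)
    (fun m m' n => by simp [Bform]; ring)
    (fun c m n => by simp [Bform]; ring)
    (fun m n n' => by simp [Bform]; ring)
    (fun c m n => by simp [Bform]; ring)

def negQ : QuadraticForm ℂ V7 := LinearMap.BilinMap.toQuadraticMap BL

theorem is2_mul_is2 : is2 * is2 = 2⁻¹ := by
  have h2 : ((Real.sqrt 2 : ℝ) : ℂ) * ((Real.sqrt 2 : ℝ) : ℂ) = 2 := by
    rw [← Complex.ofReal_mul]
    norm_num [Real.mul_self_sqrt]
  rw [is2, ← mul_inv, h2]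

theorem act_act (v : V7) (x : W8) : act v (act v x) = negQ v • x := by
  have hr := is2_mul_is2
  have hQ : negQ v = -(v 0 * v 6) + v 1 * v 5 - v 2 * v 4 + v 3 * v 3 / 2 := by
    simp [negQ, LinearMap.BilinMap.toQuadraticMap_apply, BL, Bform]
    ring
  funext k
  rw [hQ]
  fin_cases k
  · simp [act, actFun]; linear_combination (x 0 * v 3 * v 3) * hr
  · simp [act, actFun]; linear_combination (x 1 * v 3 * v 3) * hr
  · simp [act, actFun]; linear_combination (x 2 * v 3 * v 3) * hr
  · simp [act, actFun]; linear_combination (x 3 * v 3 * v 3) * hr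
  · simp [act, actFun]; linear_combination (x 4 * v 3 * v 3) * hr
  · simp [act, actFun]; linear_combination (x 5 * v 3 * v 3) * hr
  · simp [act, actFun]; linear_combination (x 6 * v 3 * v 3) * hr
  · simp [act, actFun]; linear_combination (x 7 * v 3 * v 3) * hr

theorem act_sq (v : V7) :
    act v * act v = algebraMap ℂ (Module.End ℂ W8) (negQ v) := by
  apply LinearMap.ext
  intro x
  rw [Module.End.mul_apply, Module.algebraMap_end_apply]
  exact act_act v x

/-- The representation `θ : Cl(−Q) → End(Ŵ)` induced by the action of `V` on `Ŵ`. -/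
def θ : CliffordAlgebra negQ →ₐ[ℂ] Module.End ℂ W8 :=
  CliffordAlgebra.lift negQ ⟨act, act_sq⟩

end

end SSD

section Spin

open CliffordAlgebra

variable {R M : Type*} [CommRing R] [AddCommGroup M] [Module R M] {Q : QuadraticForm R M}

theorem ι_mul_ι_mem_spinGroup {a b : M} (h : Q a * Q b = 1) : ι Q a * ι Q b ∈ spinGroup Q := by
  have hba : Q b * Q a = 1 := by rw [mul_comm, h]
  let : Invertible (Q a) := ⟨Q b, hba, h⟩
  let : Invertible (Q b) := ⟨Q a, h, hba⟩
  let := invertibleιOfInvertible Q a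
  let := invertibleιOfInvertible Q b
  have ι_mul_ι_mul_swap (c d : M) (hcd : Q c * Q d = 1) : ι Q c * ι Q d * (ι Q d * ι Q c) = 1 := by
    rw [mul_assoc, ← mul_assoc (ι Q d), ι_sq_scalar, Algebra.commutes, ← mul_assoc,
      ι_sq_scalar, ← map_mul, hcd, map_one]
  have star_eq : star (ι Q a * ι Q b) = ι Q b * ι Q a := by
    rw [star_mul, star_ι, star_ι, neg_mul_neg]
  refine ⟨⟨⟨unitOfInvertible (ι Q a) * unitOfInvertible (ι Q b), ?_, rfl⟩, ?_⟩,
    ι_mul_ι_mem_evenOdd_zero Q a b⟩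
  · exact mul_mem (Subgroup.subset_closure ⟨a, rfl⟩) (Subgroup.subset_closure ⟨b, rfl⟩)
  · refine Unitary.mem_iff.mpr ?_
    rw [star_eq]
    exact ⟨ι_mul_ι_mul_swap b a hba, ι_mul_ι_mul_swap a b h⟩

namespace spinGroup

theorem star_eq_reverse {x : CliffordAlgebra Q} (hx : x ∈ spinGroup Q) : star x = reverse x := by
  rw [star_def, involute_eq hx]

theorem mul_ι_mul_star_mem_range_ι [Invertible (2 : R)] {x : CliffordAlgebra Q}
    (hx : x ∈ spinGroup Q) (m : M) : x * ι Q m * star x ∈ LinearMap.range (ι Q) :=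
  conjAct_smul_ι_mem_range_ι (x := ⟨x, star x, mul_star_self_of_mem hx, star_mul_self_of_mem hx⟩)
    hx m

end spinGroup

end Spin

namespace SSD

open CliffordAlgebra

theorem negQ_apply (v : V7) :
    negQ v = -(v 0 * v 6) + v 1 * v 5 - v 2 * v 4 + v 3 * v 3 / 2 := by
  simp only [negQ, LinearMap.BilinMap.toQuadraticMap_apply, BL, Bform, LinearMap.mk₂_apply]
  ring

theorem Bhat_apply (p q : W8) :
    Bhat p q = p 0 * q 7 + p 7 * q 0 + p 2 * q 6 + p 6 * q 2
      - p 3 * q 4 - p 4 * q 3 - p 5 * q 1 - p 1 * q 5 := by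
  simp only [Bhat, Qhat, Pi.add_apply]
  ring

theorem Qhat_smul (a : ℂ) (z : W8) : Qhat (a • z) = a ^ 2 * Qhat z := by
  simp only [Qhat, Pi.smul_apply, smul_eq_mul]
  ring

theorem Qhat_act (v : V7) (x : W8) : Qhat (act v x) = -negQ v * Qhat x := by
  simp only [negQ_apply, act, LinearMap.mk₂_apply, Qhat, actFun]
  linear_combination (-(v 3 * v 3 * x 0 * x 7) + v 3 * v 3 * x 1 * x 5
    - v 3 * v 3 * x 2 * x 6 + v 3 * v 3 * x 3 * x 4) * is2_mul_is2

theorem Bhat_act_self (v : V7) (x : W8) : Bhat (act v x) x = 0 := by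
  simp only [Bhat_apply, act, LinearMap.mk₂_apply, actFun]
  ring

-- The octonionic product `Im (z x̄)` in coordinates.
noncomputable def crossV (z x : W8) : V7 := fun i =>
  match i with
  | 0 => z 0 * x 4 + z 1 * x 2 - z 2 * x 1 - z 4 * x 0
  | 1 => z 0 * x 6 + z 1 * x 3 - z 3 * x 1 - z 6 * x 0
  | 2 => z 0 * x 5 + z 2 * x 3 - z 3 * x 2 - z 5 * x 0
  | 3 => is2 * (z 0 * x 7 + z 1 * x 5 - z 2 * x 6 + z 3 * x 4
        - z 4 * x 3 - z 5 * x 1 + z 6 * x 2 - z 7 * x 0)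
  | 4 => z 1 * x 7 + z 4 * x 6 - z 6 * x 4 - z 7 * x 1
  | 5 => z 2 * x 7 + z 4 * x 5 - z 5 * x 4 - z 7 * x 2
  | 6 => z 3 * x 7 - z 5 * x 6 + z 6 * x 5 - z 7 * x 3

theorem act_crossV_sub (z x : W8) :
    act (crossV z x) x - Qhat x • z = (-Bhat z x / 2) • x := by
  funext k
  fin_cases k <;>
    simp only [act, LinearMap.mk₂_apply, actFun, crossV, Qhat, Bhat_apply, Pi.sub_apply,
      Pi.smul_apply, smul_eq_mul, ← mul_assoc, is2_mul_is2, Fin.reduceFinMk, Fin.isValue] <;> ring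

theorem act_crossV {z x : W8} (h : Bhat z x = 0) : act (crossV z x) x = Qhat x • z :=
  sub_eq_zero.mp (by simpa [h] using act_crossV_sub z x)

theorem negQ_eq_of_act_eq_smul {v : V7} {x z : W8} (hx : Qhat x ≠ 0)
    (h : act v x = Qhat x • z) : negQ v = -(Qhat x * Qhat z) := by
  have hQ := Qhat_act v x
  rw [h, Qhat_smul] at hQ
  apply mul_right_cancel₀ hx
  linear_combination hQ

theorem θ_ι_mul_ι (a b : V7) (x : W8) :
    θ (ι negQ a * ι negQ b) x = act a (act b x) := by
  simp [θ]

theorem exists_mem_spinGroup_θ_apply_eq_of_Bhat_eq_zero {x y z : W8} (hx : Qhat x ≠ 0)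
    (hxy : Qhat x = Qhat y) (hz : Qhat z ≠ 0) (hzx : Bhat z x = 0) (hzy : Bhat z y = 0) :
    ∃ g ∈ spinGroup negQ, θ g x = y := by
  set q := -(Qhat x * Qhat z)
  have hq : q ≠ 0 := neg_ne_zero.2 (mul_ne_zero hx hz)
  have hvx : act (crossV z x) x = Qhat x • z := act_crossV hzx
  have huy : act (crossV z y) y = Qhat y • z := act_crossV hzy
  have hv : negQ (crossV z x) = q := negQ_eq_of_act_eq_smul hx hvx
  have hu : negQ (crossV z y) = q := by rw [negQ_eq_of_act_eq_smul (hxy ▸ hx) huy, ← hxy]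
  refine ⟨ι negQ (q⁻¹ • crossV z y) * ι negQ (crossV z x),
    ι_mul_ι_mem_spinGroup ?_, ?_⟩
  · rw [QuadraticMap.map_smul, smul_eq_mul, hu, hv]
    field_simp
  · rw [θ_ι_mul_ι, map_smul, LinearMap.smul_apply, hvx, hxy, ← huy, act_act, hu, smul_smul,
      inv_mul_cancel₀ hq, one_smul]

theorem exists_apply_eq_zero_negQ_ne_zero (f : V7 →ₗ[ℂ] ℂ) : ∃ w, f w = 0 ∧ negQ w ≠ 0 := by
  let e : Fin 7 → V7 := fun i => Pi.single i 1
  by_cases h0 : f (e 0) = 0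
  · by_cases h6 : f (e 6) = 0
    · exact ⟨e 0 + e 6, by rw [map_add, h0, h6, add_zero], by simp [negQ_apply, e]⟩
    · refine ⟨f (e 3) • e 6 - f (e 6) • e 3, by rw [map_sub, map_smul, map_smul]; ring, ?_⟩
      simp [negQ_apply, e, h6]
  · refine ⟨f (e 3) • e 0 - f (e 0) • e 3, by rw [map_sub, map_smul, map_smul]; ring, ?_⟩
    simp [negQ_apply, e, h0]

def BhatBilin : W8 →ₗ[ℂ] W8 →ₗ[ℂ] ℂ :=
  LinearMap.mk₂ ℂ Bhat
    (fun _ _ _ => by simp only [Bhat_apply, Pi.add_apply]; ring)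
    (fun _ _ _ => by simp only [Bhat_apply, Pi.smul_apply, smul_eq_mul]; ring)
    (fun _ _ _ => by simp only [Bhat_apply, Pi.add_apply]; ring)
    (fun _ _ _ => by simp only [Bhat_apply, Pi.smul_apply, smul_eq_mul]; ring)

theorem exists_mem_spinGroup_θ_apply_eq {x y : W8} (hx : Qhat x ≠ 0) (hxy : Qhat x = Qhat y) :
    ∃ g ∈ spinGroup negQ, θ g x = y := by
  obtain ⟨w, hwy, hw⟩ := exists_apply_eq_zero_negQ_ne_zero (BhatBilin.flip y ∘ₗ act.flip x)
  refine exists_mem_spinGroup_θ_apply_eq_of_Bhat_eq_zero hx hxy ?_ (Bhat_act_self w x) hwy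
  rw [Qhat_act]
  exact mul_ne_zero (neg_ne_zero.2 hw) hx

/-- for each nonzero `c ∈ ℂ`, the level set `{x ∈ Ŵ | Q̂(x) = c}`
is a single orbit of the spin group of `−Q` (the invertible even elements `g`
with `g·reverse(g) = 1` and `g·ι(V)·g⁻¹ ⊆ ι(V)`) acting on `Ŵ` via `θ`. -/
theorem statement_13 (c : ℂ) (hc : c ≠ 0) (x y : W8)
    (hx : Qhat x = c) (hy : Qhat y = c) :
    ∃ g g' : CliffordAlgebra negQ,
      g * g' = 1 ∧ g' * g = 1 ∧
      g ∈ CliffordAlgebra.evenOdd negQ 0 ∧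
      g * CliffordAlgebra.reverse g = 1 ∧
      (∀ v : V7, ∃ u : V7,
        g * CliffordAlgebra.ι negQ v * g' = CliffordAlgebra.ι negQ u) ∧
      θ g x = y := by
  obtain ⟨g, hg, hgx⟩ := exists_mem_spinGroup_θ_apply_eq (hx ▸ hc) (hx.trans hy.symm)
  refine ⟨g, star g, spinGroup.mul_star_self_of_mem hg, spinGroup.star_mul_self_of_mem hg,
    CliffordAlgebra.even_toSubmodule negQ ▸ spinGroup.mem_even hg, ?_, fun v => ?_, hgx⟩
  · rw [← spinGroup.star_eq_reverse hg, spinGroup.mul_star_self_of_mem hg]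
  · obtain ⟨u, hu⟩ := spinGroup.mul_ι_mul_star_mem_range_ι hg v
    exact ⟨u, hu.symm⟩

end SSD
end
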